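/- arXiv:2005.05792 — 3 statements merged into one kernel-verified Lean document; each statement's English description precedes it below -/
import Mathlib

section
/- An oriented hypergraph G^σ is incidence balanced (i.e., there is a bipartition {X,Y} of its vertex set such that every edge meets X exactly in its positively incident vertices and Y exactly in its negatively incident vertices, or vice versa edge by edge consistently after switching) if and only if every cycle of G^σ has positive incidence sign, i.e., the product of σ over all incidences in the cycle equals +1. -/
open Matrix BigOperators

variable {V E : Type*}

/-- `M` is the signed edge-vertex incidence matrix of an incidence orientation of the
hypergraph whose incidence relation is `mem` (`mem e v` means `v ∈ e`). -/
def IsOrientation (mem : E → V → Prop) (M : Matrix E V ℝ) : Prop :=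
  ∀ e v, (mem e v → M e v = 1 ∨ M e v = -1) ∧ (¬ mem e v → M e v = 0)

/-- The incidence matrix of the all-positive orientation `G⁺`. -/
def Mplus (mem : E → V → Prop) [∀ e v, Decidable (mem e v)] : Matrix E V ℝ :=
  Matrix.of fun e v => if mem e v then 1 else 0

/-- Vertex switching at `w`: negate all incidence signs at the vertex `w`. -/
def vertexSwitch [DecidableEq V] (M : Matrix E V ℝ) (w : V) : Matrix E V ℝ :=
  Matrix.of fun e v => if v = w then -M e v else M e v

/-- Edge switching at `f`: negate all incidence signs of the edge `f`. -/
def edgeSwitch [DecidableEq E] (M : Matrix E V ℝ) (f : E) : Matrix E V ℝ :=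
  Matrix.of fun e v => if e = f then -M e v else M e v

/-- One switching step: a single vertex switching or a single edge switching. -/
def SwitchStep [DecidableEq V] [DecidableEq E] (M N : Matrix E V ℝ) : Prop :=
  (∃ w, N = vertexSwitch M w) ∨ (∃ f, N = edgeSwitch M f)

/-- Switching equivalence: a finite sequence of vertex and/or edge switchings. -/
def SwitchEquiv [DecidableEq V] [DecidableEq E] : Matrix E V ℝ → Matrix E V ℝ → Prop :=
  Relation.ReflTransGen SwitchStep

/-- Incidence balance: there is a bipartition `{X, Xᶜ}` of the vertices such that every edge
intersects one part exactly in its positively incident vertices and the other part exactly in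
its negatively incident vertices (the roles of the parts may vary edge by edge). -/
def IncBalanced (mem : E → V → Prop) (M : Matrix E V ℝ) : Prop :=
  ∃ X : V → Prop, ∀ e,
    (∀ v, mem e v → (M e v = 1 ↔ X v)) ∨ (∀ v, mem e v → (M e v = 1 ↔ ¬ X v))

/-- The adjacency matrix of an oriented hypergraph:
`a u v = ∑_{e ∋ u,v} σ(e,u)σ(e,v)` for `u ≠ v` and `0` on the diagonal. -/
def adjMat [Fintype E] [DecidableEq V] (M : Matrix E V ℝ) : Matrix V V ℝ :=
  Matrix.of fun u v => if u = v then 0 else ∑ e, M e u * M e v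

/-- The diagonal matrix of vertex degrees. -/
def degMat [Fintype E] [DecidableEq V] (mem : E → V → Prop) [∀ e v, Decidable (mem e v)] :
    Matrix V V ℝ :=
  Matrix.diagonal fun v => ((Finset.univ.filter fun e => mem e v).card : ℝ)

/-- `μ` is a (real) eigenvalue of the real matrix `A`. -/
def IsEigenvalue {n : Type*} [Fintype n] (A : Matrix n n ℝ) (μ : ℝ) : Prop :=
  ∃ x : n → ℝ, x ≠ 0 ∧ A.mulVec x = μ • x

/-- `μ` is a complex eigenvalue of the real matrix `A`. -/
def IsEigenvalueC {n : Type*} [Fintype n] (A : Matrix n n ℝ) (μ : ℂ) : Prop :=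
  ∃ x : n → ℂ, x ≠ 0 ∧ (A.map fun a => (a : ℂ)).mulVec x = μ • x

/-- Spectral radius: the maximum modulus of the (complex) eigenvalues of `A`. -/
noncomputable def specRad {n : Type*} [Fintype n] (A : Matrix n n ℝ) : ℝ :=
  sSup {r | ∃ μ : ℂ, IsEigenvalueC A μ ∧ r = ‖μ‖}

/-- `s` is a singular value of `M`, i.e. a square root of an eigenvalue of `Mᵀ M`. -/
def IsSingularValue [Fintype V] [Fintype E] (M : Matrix E V ℝ) (s : ℝ) : Prop :=
  0 ≤ s ∧ IsEigenvalue (Mᵀ * M) (s ^ 2)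

/-- The maximum singular value of `M`. -/
noncomputable def maxSingularValue [Fintype V] [Fintype E] (M : Matrix E V ℝ) : ℝ :=
  sSup {s | IsSingularValue M s}

/-- The (bipartite) incidence graph of a hypergraph, on vertex set `V ⊕ E`, with an edge
joining `v` and `e` for each incidence `(e, v)`. -/
def incGraph (mem : E → V → Prop) : SimpleGraph (V ⊕ E) where
  Adj x y := (∃ v e, x = Sum.inl v ∧ y = Sum.inr e ∧ mem e v) ∨
             (∃ v e, x = Sum.inr e ∧ y = Sum.inl v ∧ mem e v)
  symm := by
    constructor
    rintro x y (⟨v, e, h1, h2, h3⟩ | ⟨v, e, h1, h2, h3⟩)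
    · exact Or.inr ⟨v, e, h2, h1, h3⟩
    · exact Or.inl ⟨v, e, h2, h1, h3⟩
  loopless := by
    constructor
    rintro x (⟨v, e, h1, h2, h3⟩ | ⟨v, e, h1, h2, h3⟩) <;> subst h1 <;> simp at h2

/-- A hypergraph is connected if any two elements of `V ∪ E` are joined by a walk,
i.e. its incidence graph is connected. -/
def HConnected (mem : E → V → Prop) : Prop := (incGraph mem).Connected

/-- The sign of an incidence, viewed as an edge of the incidence graph. -/
def pairSign (M : Matrix E V ℝ) : V ⊕ E → V ⊕ E → ℝ
  | Sum.inl v, Sum.inr e => M e v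
  | Sum.inr e, Sum.inl v => M e v
  | _, _ => 1

/-- The incidence sign of a walk (in particular of a path or a cycle) of the oriented
hypergraph, realized as a walk of the incidence graph: the product of the signs of the
incidences traversed. -/
def walkSign {mem : E → V → Prop} (M : Matrix E V ℝ) {x y : V ⊕ E}
    (w : (incGraph mem).Walk x y) : ℝ :=
  (w.darts.map fun d => pairSign M d.toProd.1 d.toProd.2).prod

/-!
This is Harary's balance theorem for the incidence graph, whose edges carry the signs `σ(e, v)`.
A bipartition witnessing incidence balance is the same thing as a potential `g` with values `±1`
on vertices and edges of the hypergraph such that `σ(e, v) = g v * g e`; along any walk the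
product of signs then telescopes to `g x * g y`, so closed walks, in particular cycles, are
positive. Conversely, if all cycles are positive then so is every closed walk, because `bypass`
shortens a walk to a path by cutting off closed subwalks that are cycles or backtracks along one
edge, neither of which changes the sign. Then the sign of a walk depends only on its endpoints,
and the sign of walks from a fixed root in each connected component is a potential.
-/

namespace SimpleGraph.Walk

variable {α : Type*} {G : SimpleGraph α} (s : α → α → ℝ)

def gain {u v : α} (p : G.Walk u v) : ℝ :=
  (p.darts.map fun d => s d.fst d.snd).prod

variable {s}

@[simp]
lemma gain_nil {u : α} : (nil : G.Walk u u).gain s = 1 := rfl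

@[simp]
lemma gain_cons {u v w : α} (h : G.Adj u v) (p : G.Walk v w) :
    (cons h p).gain s = s u v * p.gain s := by
  simp [gain]

@[simp]
lemma gain_copy {u v u' v' : α} (p : G.Walk u v) (hu : u = u') (hv : v = v') :
    (p.copy hu hv).gain s = p.gain s := by
  subst hu hv; rfl

@[simp]
lemma gain_append {u v w : α} (p : G.Walk u v) (q : G.Walk v w) :
    (p.append q).gain s = p.gain s * q.gain s := by
  simp [gain]

lemma gain_reverse (hs : ∀ a b, G.Adj a b → s b a = s a b) {u v : α} (p : G.Walk u v) :
    p.reverse.gain s = p.gain s := by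
  induction p with
  | nil => rfl
  | cons h p ih => rw [reverse_cons, gain_append, ih, gain_cons, mul_comm]; simp [hs _ _ h]

lemma gain_eq_mul_of_potential {g : α → ℝ} (hg : ∀ a, g a * g a = 1)
    (hs : ∀ a b, G.Adj a b → s a b = g a * g b) {u v : α} (p : G.Walk u v) :
    p.gain s = g u * g v := by
  induction p with
  | nil => exact (hg _).symm
  | @cons a b c h p ih =>
    rw [gain_cons, ih, hs _ _ h]
    linear_combination g a * g c * hg b

/-- Closing a path with an edge gives either a cycle or a backtrack along that edge. -/
lemma gain_cons_eq_one_of_isPath (hinv : ∀ a b, G.Adj a b → s a b * s b a = 1)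
    (hcyc : ∀ (x : α) (c : G.Walk x x), c.IsCycle → c.gain s = 1) {u v : α} (h : G.Adj u v)
    {p : G.Walk v u} (hp : p.IsPath) : (cons h p).gain s = 1 := by
  by_cases he : s(v, u) ∈ p.edges
  · rw [hp.eq_adj_toWalk_of_mem_edges he]
    simpa using hinv u v h
  · exact hcyc u _ ((cons_isCycle_iff p h).2 ⟨hp, Sym2.eq_swap ▸ he⟩)

lemma gain_bypass [DecidableEq α] (hinv : ∀ a b, G.Adj a b → s a b * s b a = 1)
    (hcyc : ∀ (x : α) (c : G.Walk x x), c.IsCycle → c.gain s = 1) {u v : α} (p : G.Walk u v) :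
    p.bypass.gain s = p.gain s := by
  induction p with
  | nil => rfl
  | @cons u w v h p ih =>
    rw [bypass]
    split_ifs with hu
    · have hloop := gain_cons_eq_one_of_isPath hinv hcyc h (p.bypass_isPath.takeUntil hu)
      have hsplit := congrArg (gain s) (p.bypass.take_spec hu)
      rw [gain_cons, ← ih, ← hsplit, gain_append]
      rw [gain_cons] at hloop
      linear_combination (-(p.bypass.dropUntil u hu).gain s) * hloop
    · rw [gain_cons, gain_cons, ih]

lemma gain_eq_one_of_forall_isCycle (hinv : ∀ a b, G.Adj a b → s a b * s b a = 1)
    (hcyc : ∀ (x : α) (c : G.Walk x x), c.IsCycle → c.gain s = 1) {x : α} (c : G.Walk x x) :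
    c.gain s = 1 := by
  classical
  rw [← gain_bypass hinv hcyc, (isPath_iff_nil.1 c.bypass_isPath).eq_nil, gain_nil]

lemma gain_eq_of_forall_closed (hclosed : ∀ (x : α) (c : G.Walk x x), c.gain s = 1)
    {u v : α} (p q : G.Walk u v) : p.gain s = q.gain s := by
  have hp := hclosed u (p.append q.reverse)
  have hq := hclosed u (q.append q.reverse)
  rw [gain_append] at hp hq
  have hr : q.reverse.gain s ≠ 0 := right_ne_zero_of_mul_eq_one hq
  exact mul_right_cancel₀ hr (hp.trans hq.symm)

end SimpleGraph.Walk

namespace SimpleGraph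

open Walk

variable {α : Type*} {G : SimpleGraph α} {s : α → α → ℝ}

lemma exists_potential_of_forall_closed (hs : ∀ a b, G.Adj a b → s b a = s a b)
    (hclosed : ∀ (x : α) (c : G.Walk x x), c.gain s = 1) :
    ∃ g : α → ℝ, (∀ a, g a * g a = 1) ∧ ∀ a b, G.Adj a b → s a b = g a * g b := by
  have hroot (a : α) : G.Reachable (G.connectedComponentMk a).out a :=
    ConnectedComponent.exact (Quot.out_eq _)
  set g : α → ℝ := fun a => (hroot a).some.gain s
  have hg (a : α) : g a * g a = 1 := by
    simpa [gain_reverse hs] using hclosed _ ((hroot a).some.append (hroot a).some.reverse)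
  refine ⟨g, hg, fun a b h => ?_⟩
  have hsame : (G.connectedComponentMk a).out = (G.connectedComponentMk b).out :=
    congrArg Quot.out (ConnectedComponent.sound h.reachable)
  have hstep : g b = g a * s a b := by
    simpa [g, concat_eq_append] using gain_eq_of_forall_closed hclosed (hroot b).some
      (((hroot a).some.concat h).copy hsame rfl)
  rw [hstep, ← mul_assoc, hg, one_mul]

theorem forall_isCycle_gain_eq_one_iff (hs : ∀ a b, G.Adj a b → s b a = s a b)
    (hinv : ∀ a b, G.Adj a b → s a b * s b a = 1) :
    (∀ (x : α) (c : G.Walk x x), c.IsCycle → c.gain s = 1) ↔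
      ∃ g : α → ℝ, (∀ a, g a * g a = 1) ∧ ∀ a b, G.Adj a b → s a b = g a * g b := by
  refine ⟨fun hcyc => exists_potential_of_forall_closed hs
    (fun _ c => gain_eq_one_of_forall_isCycle hinv hcyc c), ?_⟩
  rintro ⟨g, hg, hgs⟩ x c -
  exact (gain_eq_mul_of_potential hg hgs c).trans (hg x)

end SimpleGraph

lemma eq_ite_of_eq_one_iff {R : Type*} [One R] [Neg R] {m : R} (hm : m = 1 ∨ m = -1)
    {P : Prop} [Decidable P] (h : m = 1 ↔ P) : m = if P then 1 else -1 := by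
  split_ifs with hP
  · exact h.2 hP
  · exact hm.resolve_left (mt h.1 hP)

section Hypergraph

variable {mem : E → V → Prop} {M : Matrix E V ℝ}

lemma pairSign_symm (M : Matrix E V ℝ) (a b : V ⊕ E) : pairSign M a b = pairSign M b a := by
  cases a <;> cases b <;> rfl

lemma forall_incGraph_adj_pairSign_eq_iff {g : V ⊕ E → ℝ} :
    (∀ a b, (incGraph mem).Adj a b → pairSign M a b = g a * g b) ↔
      ∀ e v, mem e v → M e v = g (.inl v) * g (.inr e) := by
  refine ⟨fun H e v h => H _ _ (Or.inl ⟨v, e, rfl, rfl, h⟩), ?_⟩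
  rintro H a b (⟨v, e, rfl, rfl, h⟩ | ⟨v, e, rfl, rfl, h⟩)
  · exact H e v h
  · rw [mul_comm]; exact H e v h

lemma IsOrientation.pairSign_mul_pairSign (hM : IsOrientation mem M) {a b : V ⊕ E}
    (h : (incGraph mem).Adj a b) : pairSign M a b * pairSign M b a = 1 := by
  rcases h with ⟨v, e, rfl, rfl, hm⟩ | ⟨v, e, rfl, rfl, hm⟩ <;>
    rcases (hM e v).1 hm with h1 | h1 <;> simp [pairSign, h1]

/-- The bipartition is `{g = 1, g = -1}` on vertices; `g e = -1` marks the edges on which the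
roles of the two parts are exchanged. -/
lemma IsOrientation.incBalanced_iff_exists_potential (hM : IsOrientation mem M) :
    IncBalanced mem M ↔ ∃ g : V ⊕ E → ℝ, (∀ a, g a * g a = 1) ∧
      ∀ e v, mem e v → M e v = g (.inl v) * g (.inr e) := by
  classical
  constructor
  · rintro ⟨X, hX⟩
    refine ⟨Sum.elim (fun v => if X v then 1 else -1)
      (fun e => if ∀ v, mem e v → (M e v = 1 ↔ X v) then 1 else -1), ?_, fun e v hv => ?_⟩
    · rintro (v | e) <;> simp only [Sum.elim_inl, Sum.elim_inr] <;> split_ifs <;> norm_num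
    · have hsign := (hM e v).1 hv
      by_cases hA : ∀ v, mem e v → (M e v = 1 ↔ X v)
      · simp only [Sum.elim_inl, Sum.elim_inr, if_pos hA, mul_one]
        exact eq_ite_of_eq_one_iff hsign (hA v hv)
      · simp only [Sum.elim_inl, Sum.elim_inr, if_neg hA, mul_neg_one, neg_ite, neg_neg]
        rw [← ite_not]
        exact eq_ite_of_eq_one_iff hsign (((hX e).resolve_left hA) v hv)
  · rintro ⟨g, hg, hgM⟩
    refine ⟨fun v => g (.inl v) = 1, fun e => ?_⟩
    rcases mul_self_eq_one_iff.1 (hg (.inr e)) with he | he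
    · left
      intro v hv
      rw [hgM e v hv, he, mul_one]
    · right
      intro v hv
      rw [hgM e v hv, he]
      rcases mul_self_eq_one_iff.1 (hg (.inl v)) with hgv | hgv <;> norm_num [hgv]

end Hypergraph

/-- `G^σ` is incidence balanced iff every cycle has positive incidence sign. -/
theorem incBalanced_iff_cycles_positive
    (mem : E → V → Prop) (M : Matrix E V ℝ) (hM : IsOrientation mem M) :
    IncBalanced mem M ↔
      ∀ (x : V ⊕ E) (w : (incGraph mem).Walk x x), w.IsCycle → walkSign M w = 1 := by
  calc IncBalanced mem M ↔ _ := hM.incBalanced_iff_exists_potential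
    _ ↔ _ := by simp only [← forall_incGraph_adj_pairSign_eq_iff]
    _ ↔ _ := (SimpleGraph.forall_isCycle_gain_eq_one_iff (fun a b _ => pairSign_symm M b a)
      (fun _ _ => hM.pairSign_mul_pairSign)).symm
end

section
/- Let G be a connected hypergraph and suppose ρ(A(G^+)) is an eigenvalue of A(G^σ) with real eigenvector x. Then x has no zero entries, and with S = diag(x_v/|x_v|), one has S^{-1} A(G^σ) S = A(G^+). -/
open Matrix BigOperators

variable {V E : Type*}

/-!
Since `|A(G^σ)| ≤ A(G⁺)` entrywise and `A(G⁺)` is symmetric, `ρ • 1 - A(G⁺)` is positive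
semidefinite, and `xᵀ A(G^σ) x ≤ |x|ᵀ A(G⁺) |x|` turns the eigen-equation for `x` into
`|x|ᵀ (ρ • 1 - A(G⁺)) |x| ≤ 0`; hence `A(G⁺) |x| = ρ |x|`. The support of a nonnegative
eigenvector of `A(G⁺)` is closed under adjacency, so connectivity makes `x` nowhere zero.
Finally, with `s = x / |x|`, in
`ρ |x_u| = ∑_v A(G⁺)_{uv} |x_v| ≥ ∑_v s_u A(G^σ)_{uv} x_v = ρ s_u x_u = ρ |x_u|`
every termwise inequality is an equality; this is `S A(G^σ) S = A(G⁺)` with `S = S⁻¹`.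
-/

section SpectralRadius

open Matrix

variable {n : Type*} [Fintype n]

theorem IsEigenvalueC.hasEigenvalue [DecidableEq n] {A : Matrix n n ℝ} {μ : ℂ}
    (h : IsEigenvalueC A μ) : Module.End.HasEigenvalue (toLin' (A.map ((↑) : ℝ → ℂ))) μ := by
  obtain ⟨z, hz, hAz⟩ := h
  exact Module.End.hasEigenvalue_of_hasEigenvector
    ⟨Module.End.mem_eigenspace_iff.mpr (by rwa [toLin'_apply]), hz⟩

theorem bddAbove_norm_eigenvaluesC (A : Matrix n n ℝ) :
    BddAbove {r | ∃ μ : ℂ, IsEigenvalueC A μ ∧ r = ‖μ‖} := by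
  classical
  refine ((Module.End.finite_hasEigenvalue (toLin' (A.map ((↑) : ℝ → ℂ)))).image
    (‖·‖ : ℂ → ℝ)).bddAbove.mono ?_
  rintro _ ⟨μ, hμ, rfl⟩
  exact ⟨μ, hμ.hasEigenvalue, rfl⟩

theorem IsEigenvalueC.norm_le_specRad {A : Matrix n n ℝ} {μ : ℂ} (h : IsEigenvalueC A μ) :
    ‖μ‖ ≤ specRad A :=
  le_csSup (bddAbove_norm_eigenvaluesC A) ⟨μ, h, rfl⟩

theorem le_specRad_of_mulVec_eq_smul {A : Matrix n n ℝ} {μ : ℝ} {w : n → ℝ} (hw : w ≠ 0)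
    (h : A *ᵥ w = μ • w) : μ ≤ specRad A := by
  have hC : IsEigenvalueC A μ := by
    refine ⟨fun v => (w v : ℂ), fun h0 => hw (funext fun v => by simpa using congrFun h0 v), ?_⟩
    ext u
    simpa [mulVec, dotProduct] using congrArg ((↑) : ℝ → ℂ) (congrFun h u)
  simpa using (le_abs_self μ).trans (by simpa using hC.norm_le_specRad)

theorem Matrix.IsHermitian.posSemidef_specRad_smul_one_sub [DecidableEq n] {B : Matrix n n ℝ}
    (hB : B.IsHermitian) : (specRad B • 1 - B).PosSemidef := by
  open scoped MatrixOrder in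
  have : B ≤ algebraMap ℝ (Matrix n n ℝ) (specRad B) := by
    refine le_algebraMap_of_spectrum_le (fun r hr => ?_) hB
    obtain ⟨i, rfl⟩ := hB.spectrum_real_eq_range_eigenvalues ▸ hr
    exact le_specRad_of_mulVec_eq_smul
      (by simpa using hB.eigenvectorBasis.orthonormal.ne_zero i)
      (hB.mulVec_eigenvectorBasis i)
  rwa [Algebra.algebraMap_eq_smul_one] at this

end SpectralRadius

namespace Matrix

section Comparison

variable {n : Type*} [Fintype n] {A B : Matrix n n ℝ}

theorem dotProduct_mulVec_le_of_abs_le (hAB : ∀ u v, |A u v| ≤ B u v) (y x : n → ℝ) :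
    y ⬝ᵥ A *ᵥ x ≤ |y| ⬝ᵥ B *ᵥ |x| := by
  simp only [dotProduct, mulVec, Finset.mul_sum]
  refine Finset.sum_le_sum fun u _ => Finset.sum_le_sum fun v _ => ?_
  calc y u * (A u v * x v) ≤ |y u| * (|A u v| * |x v|) := by
        rw [← abs_mul, ← abs_mul]; exact le_abs_self _
    _ ≤ |y u| * (B u v * |x v|) := by gcongr; exact hAB u v
    _ = |y| u * (B u v * |x| v) := rfl

theorem IsHermitian.mulVec_abs_eq_specRad_smul [DecidableEq n] (hB : B.IsHermitian)
    (hAB : ∀ u v, |A u v| ≤ B u v) {x : n → ℝ} (hx : A *ᵥ x = specRad B • x) :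
    B *ᵥ |x| = specRad B • |x| := by
  set P := specRad B • (1 : Matrix n n ℝ) - B
  have hP : P.PosSemidef := hB.posSemidef_specRad_smul_one_sub
  have hPx : |x| ⬝ᵥ P *ᵥ |x| = specRad B * (|x| ⬝ᵥ |x|) - |x| ⬝ᵥ B *ᵥ |x| := by
    rw [sub_mulVec, smul_mulVec, one_mulVec, dotProduct_sub, dotProduct_smul, smul_eq_mul]
  have hxx : |x| ⬝ᵥ |x| = x ⬝ᵥ x := by simp [dotProduct, abs_mul_abs_self]
  have hRayleigh : x ⬝ᵥ A *ᵥ x = specRad B * (x ⬝ᵥ x) := by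
    rw [hx, dotProduct_smul, smul_eq_mul]
  have hzero : star |x| ⬝ᵥ P *ᵥ |x| = 0 := by
    refine le_antisymm ?_ (by simpa using hP.dotProduct_mulVec_nonneg |x|)
    have := dotProduct_mulVec_le_of_abs_le hAB x x
    rw [star_trivial, hPx, hxx]
    linarith
  have := (hP.dotProduct_mulVec_zero_iff |x|).mp hzero
  rwa [sub_mulVec, smul_mulVec, one_mulVec, sub_eq_zero, eq_comm] at this

theorem mul_abs_eq_div_abs_mul_mul_of_mulVec_eq (hAB : ∀ u v, |A u v| ≤ B u v) {r : ℝ}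
    {x : n → ℝ} (hA : A *ᵥ x = r • x) (hB : B *ᵥ |x| = r • |x|) (u v : n) :
    B u v * |x v| = x u / |x u| * A u v * x v := by
  set s := x u / |x u|
  have hs : |s| ≤ 1 := by
    rw [abs_div, abs_abs]; exact div_self_le_one _
  have hsx : s * x u = |x u| := by
    rw [div_mul_eq_mul_div, ← abs_mul_abs_self (x u), mul_div_assoc]
    rcases eq_or_ne (x u) 0 with h | h
    · simp [h]
    · rw [div_self (abs_ne_zero.mpr h), mul_one]
  have hsum : ∑ w, (B u w * |x w| - s * A u w * x w) = 0 := by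
    have hBu := congrFun hB u
    have hAu := congrFun hA u
    simp only [mulVec, dotProduct, Pi.smul_apply, Pi.abs_apply, smul_eq_mul] at hBu hAu
    simp only [Finset.sum_sub_distrib, mul_assoc, ← Finset.mul_sum, hBu, hAu]
    rw [← hsx]; ring
  have hnonneg : ∀ w ∈ Finset.univ, 0 ≤ B u w * |x w| - s * A u w * x w := fun w _ => by
    have : s * A u w * x w ≤ |A u w| * |x w| := calc
      s * A u w * x w ≤ |s| * |A u w| * |x w| := by
        rw [← abs_mul, ← abs_mul]; exact le_abs_self _
      _ ≤ |A u w| * |x w| := by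
        gcongr; exact mul_le_of_le_one_left (abs_nonneg _) hs
    nlinarith [hAB u w, abs_nonneg (x w)]
  linarith [(Finset.sum_eq_zero_iff_of_nonneg hnonneg).mp hsum v (Finset.mem_univ v)]

theorem eq_zero_of_mulVec_eq_smul_of_pos (hB : ∀ u v, 0 ≤ B u v) {r : ℝ} {y : n → ℝ}
    (hy : 0 ≤ y) (h : B *ᵥ y = r • y) {u v : n} (hu : y u = 0) (huv : 0 < B u v) : y v = 0 := by
  have hsum : ∑ w, B u w * y w = 0 := by
    simpa [mulVec, dotProduct, hu] using congrFun h u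
  have := (Finset.sum_eq_zero_iff_of_nonneg fun w _ => mul_nonneg (hB u w) (hy w)).mp hsum v
    (Finset.mem_univ v)
  exact (mul_eq_zero.mp this).resolve_left huv.ne'

end Comparison

end Matrix

theorem Matrix.diagonal_inv_mul_mul_diagonal_eq {n R : Type*} [Fintype n] [DecidableEq n]
    [CommRing R] {A B : Matrix n n R} {s : n → R} (hs : ∀ v, s v * s v = 1)
    (h : ∀ u v, s u * A u v * s v = B u v) : (diagonal s)⁻¹ * A * diagonal s = B := by
  have hinv : (diagonal s)⁻¹ = diagonal s :=
    inv_eq_left_inv (by rw [diagonal_mul_diagonal, funext hs, diagonal_one])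
  ext u v
  rw [hinv, mul_diagonal, diagonal_mul, h]

section Hypergraph

variable {mem : E → V → Prop}

theorem IsOrientation.abs_eq_Mplus [∀ e v, Decidable (mem e v)] {M : Matrix E V ℝ}
    (hM : IsOrientation mem M) (e : E) (v : V) : |M e v| = Mplus mem e v := by
  by_cases h : mem e v
  · rcases (hM e v).1 h with h1 | h1 <;> simp [Mplus, h, h1]
  · simp [Mplus, h, (hM e v).2 h]

theorem Mplus_nonneg [∀ e v, Decidable (mem e v)] (e : E) (v : V) : 0 ≤ Mplus mem e v := by
  simp only [Mplus, of_apply]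
  split_ifs <;> norm_num

variable [Fintype E] [DecidableEq V]

theorem isHermitian_adjMat (M : Matrix E V ℝ) : (adjMat M).IsHermitian := by
  ext u v
  simp only [conjTranspose_apply, star_trivial, adjMat, of_apply, eq_comm (a := v)]
  split_ifs
  · rfl
  · exact Finset.sum_congr rfl fun e _ => mul_comm _ _

variable [∀ e v, Decidable (mem e v)]

theorem IsOrientation.abs_adjMat_le {M : Matrix E V ℝ} (hM : IsOrientation mem M) (u v : V) :
    |adjMat M u v| ≤ adjMat (Mplus mem) u v := by
  simp only [adjMat, of_apply]
  split_ifs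
  · simp
  · refine (Finset.abs_sum_le_sum_abs _ _).trans_eq (Finset.sum_congr rfl fun e _ => ?_)
    rw [abs_mul, hM.abs_eq_Mplus, hM.abs_eq_Mplus]

theorem adjMat_Mplus_nonneg (u v : V) : 0 ≤ adjMat (Mplus mem) u v := by
  simp only [adjMat, of_apply]
  split_ifs
  · rfl
  · exact Finset.sum_nonneg fun e _ => mul_nonneg (Mplus_nonneg e u) (Mplus_nonneg e v)

theorem adjMat_Mplus_pos {u v : V} {e : E} (huv : u ≠ v) (hu : mem e u) (hv : mem e v) :
    0 < adjMat (Mplus mem) u v := by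
  simp only [adjMat, of_apply, if_neg huv]
  refine lt_of_lt_of_le ?_ (Finset.single_le_sum (fun e _ => mul_nonneg (Mplus_nonneg e u)
    (Mplus_nonneg e v)) (Finset.mem_univ e))
  simp [Mplus, hu, hv]

end Hypergraph

theorem HConnected.induction_on_edges {mem : E → V → Prop} (hconn : HConnected mem)
    {P : V → Prop} (hP : ∀ e u v, mem e u → mem e v → P u → P v) {v₀ : V} (h₀ : P v₀) (v : V) :
    P v := by
  let Q : V ⊕ E → Prop := Sum.elim P fun e => ∃ u, mem e u ∧ P u
  have hwalk : ∀ {a b : V ⊕ E}, (incGraph mem).Walk a b → Q a → Q b := by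
    intro a b w
    induction w with
    | nil => exact id
    | cons hadj _ ih =>
      refine fun ha => ih ?_
      rcases hadj with ⟨u, e, rfl, rfl, hue⟩ | ⟨u, e, rfl, rfl, hue⟩
      · exact ⟨u, hue, ha⟩
      · obtain ⟨w, hwe, hw⟩ := ha
        exact hP e w u hwe hue hw
  obtain ⟨w⟩ := hconn.preconnected (Sum.inl v₀) (Sum.inl v)
  exact hwalk w h₀

/-- if `G` is connected and `ρ(A(G⁺))` is an eigenvalue of `A(G^σ)` with a real
eigenvector `x`, then `x` has no zero entries and, with `S = diag(x_v/|x_v|)`,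
`S⁻¹ A(G^σ) S = A(G⁺)`. -/
theorem perron_equality_case [Fintype V] [Fintype E] [DecidableEq V]
    (mem : E → V → Prop) [∀ e v, Decidable (mem e v)] (M : Matrix E V ℝ)
    (hM : IsOrientation mem M) (hconn : HConnected mem)
    (x : V → ℝ) (hx : x ≠ 0)
    (heig : (adjMat M).mulVec x = specRad (adjMat (Mplus mem)) • x) :
    (∀ v, x v ≠ 0) ∧
      (Matrix.diagonal fun v => x v / |x v|)⁻¹ * adjMat M *
          (Matrix.diagonal fun v => x v / |x v|) = adjMat (Mplus mem) := by
  have hAB := hM.abs_adjMat_le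
  have hperron := (isHermitian_adjMat (Mplus mem)).mulVec_abs_eq_specRad_smul hAB heig
  have hx0 : ∀ v, x v ≠ 0 := by
    obtain ⟨v₀, hv₀⟩ := Function.ne_iff.mp hx
    refine hconn.induction_on_edges (fun e u v hu hv hxu hxv => hxu ?_) hv₀
    rcases eq_or_ne u v with rfl | huv
    · exact hxv
    have h := Matrix.eq_zero_of_mulVec_eq_smul_of_pos adjMat_Mplus_nonneg (abs_nonneg x)
      hperron (by simpa using hxv) (adjMat_Mplus_pos huv.symm hv hu)
    simpa using h
  refine ⟨hx0, Matrix.diagonal_inv_mul_mul_diagonal_eq (fun v => ?_) fun u v => ?_⟩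
  · rw [div_mul_div_comm, abs_mul_abs_self, div_self (mul_self_ne_zero.mpr (hx0 v))]
  · have h := Matrix.mul_abs_eq_div_abs_mul_mul_of_mulVec_eq hAB heig hperron u v
    refine mul_right_cancel₀ (abs_ne_zero.mpr (hx0 v)) ?_
    rw [h, mul_assoc _ (x v / |x v|), div_mul_cancel₀ _ (abs_ne_zero.mpr (hx0 v))]
end

section
/- Let G^σ be a connected k-uniform oriented hypergraph with k even, and let ΓG^σ be the induced signed hypergraph with edge signs sgn_σ(e) = (-1)^{k-1} Π_{v∈e} σ(e,v). Then ΓG^σ is switching equivalent to ΓG^+ if and only if -ρ(A(G)) is an H-eigenvalue (an eigenvalue with a real eigenvector) of the adjacency tensor A(ΓG^σ). -/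
open BigOperators

variable {V : Type*}

/-- The adjacency tensor of a signed `k`-uniform hypergraph with edge set `E` and edge signs
`γ`: the entry at a tuple whose underlying vertex set is an edge `e` is `γ(e)/(k-1)!`,
and all other entries are `0`. -/
noncomputable def adjT (R : Type*) [Field R] [Fintype V] [DecidableEq V] (k : ℕ)
    (E : Finset (Finset V)) (γ : Finset V → R) : (Fin k → V) → R :=
  fun i => if Finset.image i Finset.univ ∈ E
    then γ (Finset.image i Finset.univ) / (Nat.factorial (k - 1) : R) else 0

/-- `(lam, x)` is an eigenpair of the order-`k` tensor `A`:
`x ≠ 0` and `(A x^{k-1})_v = lam * x_v^{k-1}` for every `v`. -/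
def IsTensorEigenpair (R : Type*) [CommRing R] [Fintype V] [DecidableEq V] (k : ℕ) [NeZero k]
    (A : (Fin k → V) → R) (lam : R) (x : V → R) : Prop :=
  x ≠ 0 ∧ ∀ v : V,
    (∑ i : Fin k → V, if i 0 = v
      then A i * ∏ j ∈ Finset.univ.filter (fun j : Fin k => j ≠ 0), x (i j) else 0)
    = lam * x v ^ (k - 1)

/-- The spectral radius of a real order-`k` tensor: the supremum of the moduli of its
(complex) eigenvalues. -/
noncomputable def tSpecRad [Fintype V] [DecidableEq V] (k : ℕ) [NeZero k]
    (A : (Fin k → V) → ℝ) : ℝ :=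
  sSup {r | ∃ lam : ℂ,
    (∃ x : V → ℂ, IsTensorEigenpair ℂ k (fun i => ((A i : ℝ) : ℂ)) lam x) ∧
      r = ‖lam‖}

/-- One vertex switching on a signed hypergraph: negate the sign of every edge containing `w`. -/
def VSwitchStep [DecidableEq V] (γ δ : Finset V → ℝ) : Prop :=
  ∃ w : V, ∀ e, δ e = if w ∈ e then -γ e else γ e

/-- Two signed hypergraphs (with common edge set `E`) are switching equivalent if one is
obtained from the other by a finite sequence of vertex switchings (signs off `E` are
irrelevant). -/
def SignedSwitchEquiv [DecidableEq V] (E : Finset (Finset V)) (γ γ' : Finset V → ℝ) : Prop :=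
  ∃ δ, Relation.ReflTransGen VSwitchStep γ δ ∧ ∀ e ∈ E, δ e = γ' e

/-- The action `S T S` of a signature matrix (diagonal ±1 matrix) `S` on an order-`k` tensor:
`(S T S)_{i_1…i_k} = S_{i_1 i_1} t_{i_1…i_k} S_{i_2 i_2} ⋯ S_{i_k i_k}`. -/
def conjT (R : Type*) [CommRing R] [DecidableEq V] (k : ℕ) [NeZero k] [Fintype V]
    (S : V → R) (A : (Fin k → V) → R) : (Fin k → V) → R :=
  fun i => S (i 0) * A i * ∏ j ∈ Finset.univ.filter (fun j : Fin k => j ≠ 0), S (i j)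

/-- The diagonal degree tensor `D(G)` of the hypergraph with edge set `E`:
`d_{v…v} = deg v`, all other entries `0`. -/
noncomputable def degT [Fintype V] [DecidableEq V] (k : ℕ) [NeZero k]
    (E : Finset (Finset V)) : (Fin k → V) → ℝ :=
  fun i => if ∀ j, i j = i 0 then ((E.filter fun e => i 0 ∈ e).card : ℝ) else 0

/-- The Laplacian tensor `L(Γ) = D(G) + A(Γ)` of a signed `k`-uniform hypergraph. -/
noncomputable def lapT [Fintype V] [DecidableEq V] (k : ℕ) [NeZero k]
    (E : Finset (Finset V)) (γ : Finset V → ℝ) : (Fin k → V) → ℝ :=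
  fun i => degT k E i + adjT ℝ k E γ i

/-- `σ` is an incidence orientation of the hypergraph with edge set `E`: each incidence
`(e, v)` with `v ∈ e ∈ E` is labeled `+1` or `-1`. -/
def IsIncidenceOrientation (E : Finset (Finset V)) (σ : Finset V → V → ℝ) : Prop :=
  ∀ e ∈ E, ∀ v ∈ e, σ e v = 1 ∨ σ e v = -1

/-- The edge signs of the signed hypergraph `ΓG^σ` induced by an orientation `σ`:
`sgn_σ(e) = (-1)^{|e|-1} ∏_{v ∈ e} σ(e,v)` (for `k`-uniform edges, `|e| = k`). -/
def inducedSign [DecidableEq V] (k : ℕ) (σ : Finset V → V → ℝ) : Finset V → ℝ :=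
  fun e => (-1 : ℝ) ^ (k - 1) * ∏ v ∈ e, σ e v

/-- The incidence graph of the hypergraph with edge set `E`. -/
def hIncGraph [DecidableEq V] (E : Finset (Finset V)) : SimpleGraph (V ⊕ {e // e ∈ E}) where
  Adj x y := (∃ v e, x = Sum.inl v ∧ y = Sum.inr e ∧ v ∈ e.1) ∨
             (∃ v e, x = Sum.inr e ∧ y = Sum.inl v ∧ v ∈ e.1)
  symm := ⟨by
    rintro x y (⟨v, e, h1, h2, h3⟩ | ⟨v, e, h1, h2, h3⟩)
    · exact Or.inr ⟨v, e, h2, h1, h3⟩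
    · exact Or.inl ⟨v, e, h2, h1, h3⟩⟩
  loopless := ⟨by
    rintro x (⟨v, e, h1, h2, h3⟩ | ⟨v, e, h1, h2, h3⟩) <;> subst h1 <;> simp at h2⟩

/-- A hypergraph is connected if any two elements of `V ∪ E` are joined by a walk. -/
def HConnectedF [DecidableEq V] (E : Finset (Finset V)) : Prop := (hIncGraph E).Connected

/-!
Let `μ` be the maximum of the Lagrangian `Σ_{e ∈ E} ∏_{u ∈ e} x_u` of `G` over nonnegative `x`
with `Σ x_v^k = 1`. A maximiser `x₀` is strictly positive because `G` is connected: raising the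
zero coordinates to `ε` gains order `ε^{k-1}` on an edge meeting the support and costs only order
`ε^k`. The Lagrange condition then makes `x₀` an eigenvector of `A(G)` for `kμ`, while for any
complex eigenpair `(λ, z)` the vector `m = |z|` satisfies `|λ| m^{[k-1]} ≤ A(G) m^{k-1}`, so
`|λ| ≤ kμ`; hence `ρ(A(G)) = kμ`.

If a `±1` vector `s` switches `ΓG^σ` to `ΓG⁺`, then `s x₀` is an eigenvector of `A(ΓG^σ)` for
`-kμ`, because `k - 1` is odd. Conversely, pairing the eigen-equation of a real eigenvector `x`
for `-kμ` with `x` gives `Σ_e γ(e) ∏ x = -μ Σ x^k = -μ Σ |x|^k` (as `k` is even), so `x` attains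
the bound `Σ_e γ(e) ∏ x ≥ -Σ_e ∏ |x| ≥ -μ Σ |x|^k`. Hence `|x|` is a maximiser, thus positive, and
equality edge by edge says that the signs of `x` switch `γ` to `-1`.
-/

open Finset

section AdjacencyTensor

variable [DecidableEq V]

/-- The entries of the vector `A(Γ) x^{k-1}` for a `k`-uniform signed hypergraph `Γ`. -/
def edgeSum {R : Type*} [CommSemiring R] (E : Finset (Finset V)) (γ : Finset V → R) (x : V → R)
    (v : V) : R :=
  ∑ e ∈ E with v ∈ e, γ e * ∏ u ∈ e.erase v, x u

theorem Finset.insert_eq_iff_eq_erase_of_card_lt {s t : Finset V} {v : V} (hv : v ∈ s)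
    (hts : t.card < s.card) : insert v t = s ↔ t = s.erase v := by
  refine ⟨fun h => ?_, fun h => by rw [h, insert_erase hv]⟩
  have hsub : s.erase v ⊆ t := fun u hu => by
    rw [← h, mem_erase] at *
    exact (mem_insert.mp hu.2).resolve_left hu.1
  exact (eq_of_subset_of_card_le hsub (by rw [card_erase_of_mem hv]; omega)).symm

theorem image_fin_cons {n : ℕ} (v : V) (i : Fin n → V) :
    image (Fin.cons v i : Fin (n + 1) → V) univ = insert v (image i univ) := by
  ext u
  simp [Fin.exists_fin_succ, eq_comm]

variable [Fintype V]

theorem sum_fin_succ_ite_zero_eq {M : Type*} [AddCommMonoid M] {n : ℕ} (v : V)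
    (f : (Fin (n + 1) → V) → M) :
    ∑ i : Fin (n + 1) → V, (if i 0 = v then f i else 0) = ∑ i : Fin n → V, f (Fin.cons v i) := by
  rw [← (Fin.consEquiv fun _ => V).sum_comp, Fintype.sum_prod_type]
  simp [Fin.consEquiv]

/-- The tuples `(v, i₁, …, iₙ)` whose underlying set is `s` are, for `v ∈ s`, the `n!`
enumerations of `s \ {v}` prefixed by `v`. -/
theorem sum_ite_insert_image_eq {R : Type*} [CommSemiring R] (x : V → R) {n : ℕ} {s : Finset V}
    (hs : s.card = n + 1) (v : V) :
    ∑ i : Fin n → V, (if insert v (image i univ) = s then ∏ j, x (i j) else 0)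
      = if v ∈ s then n.factorial * ∏ u ∈ s.erase v, x u else 0 := by
  induction n generalizing s v with
  | zero =>
    obtain ⟨a, rfl⟩ := card_eq_one.mp hs
    by_cases hv : v = a <;> simp [hv]
  | succ n ih =>
    split_ifs with hv
    swap
    · refine sum_eq_zero fun i _ => if_neg fun h => hv ?_
      exact h ▸ mem_insert_self v _
    have hs' : (s.erase v).card = n + 1 := by rw [card_erase_of_mem hv, hs]; rfl
    have hlt : ∀ w (i : Fin n → V), (insert w (image i univ)).card < s.card := fun w i => by
      have := (card_insert_le w (image i univ)).trans (Nat.succ_le_succ card_image_le)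
      rw [card_univ, Fintype.card_fin] at this
      omega
    rw [← (Fin.consEquiv fun _ => V).sum_comp, Fintype.sum_prod_type]
    simp only [Fin.consEquiv, Equiv.coe_fn_mk, image_fin_cons, Fin.prod_univ_succ, Fin.cons_zero,
      Fin.cons_succ, insert_eq_iff_eq_erase_of_card_lt hv (hlt _ _), ← mul_ite_zero, ← mul_sum,
      ih hs']
    simp only [mul_ite, mul_zero]
    rw [sum_ite_mem, univ_inter,
      sum_congr rfl fun w hw => by rw [mul_left_comm, mul_prod_erase _ x hw], sum_const, hs',
      nsmul_eq_mul, Nat.factorial_succ]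
    push_cast
    ring

theorem sum_adjT_mul_prod_eq_edgeSum {R : Type*} [Field R] [CharZero R] {k : ℕ} [NeZero k]
    {E : Finset (Finset V)} (hE : ∀ e ∈ E, e.card = k) (γ : Finset V → R) (x : V → R) (v : V) :
    (∑ i : Fin k → V, if i 0 = v
      then adjT R k E γ i * ∏ j ∈ univ.filter (fun j : Fin k => j ≠ 0), x (i j) else 0)
      = edgeSum E γ x v := by
  obtain ⟨n, rfl⟩ : ∃ n, k = n + 1 := ⟨k - 1, by have := NeZero.ne k; omega⟩
  have hprod : ∀ i : Fin n → V,
      ∏ j ∈ univ.filter (fun j : Fin (n + 1) => j ≠ 0), x ((Fin.cons v i : Fin (n + 1) → V) j)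
        = ∏ j, x (i j) := by
    intro i
    have hsucc : univ.filter (fun j : Fin (n + 1) => j ≠ 0) = image Fin.succ univ := by
      ext j; cases j using Fin.cases <;> simp
    rw [hsucc, prod_image (Fin.succ_injective n).injOn]
    simp only [Fin.cons_succ]
  have hfac : (n.factorial : R) ≠ 0 := Nat.cast_ne_zero.mpr n.factorial_ne_zero
  rw [sum_fin_succ_ite_zero_eq]
  simp only [adjT, image_fin_cons, hprod, add_tsub_cancel_right, ite_mul, zero_mul]
  calc ∑ i : Fin n → V, (if insert v (image i univ) ∈ E
        then γ (insert v (image i univ)) / n.factorial * ∏ j, x (i j) else 0)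
      = ∑ e ∈ E, γ e / n.factorial
          * ∑ i : Fin n → V, (if insert v (image i univ) = e then ∏ j, x (i j) else 0) := by
        simp only [mul_sum, mul_ite_zero]
        rw [sum_comm]
        exact sum_congr rfl fun i _ =>
          (sum_ite_eq E _ fun e => γ e / n.factorial * ∏ j, x (i j)).symm
    _ = edgeSum E γ x v := by
        rw [edgeSum, sum_filter]
        refine sum_congr rfl fun e he => ?_
        rw [sum_ite_insert_image_eq x (by rw [hE e he]) v]
        split_ifs
        · field_simp
        · simp

theorem isTensorEigenpair_adjT_iff {R : Type*} [Field R] [CharZero R] {k : ℕ} [NeZero k]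
    {E : Finset (Finset V)} (hE : ∀ e ∈ E, e.card = k) {γ : Finset V → R} {lam : R} {x : V → R} :
    IsTensorEigenpair R k (adjT R k E γ) lam x ↔
      x ≠ 0 ∧ ∀ v, edgeSum E γ x v = lam * x v ^ (k - 1) := by
  simp only [IsTensorEigenpair, sum_adjT_mul_prod_eq_edgeSum hE]

theorem adjT_ofReal (k : ℕ) (E : Finset (Finset V)) (γ : Finset V → ℝ) :
    (fun i => ((adjT ℝ k E γ i : ℝ) : ℂ)) = adjT ℂ k E fun e => (γ e : ℂ) := by
  ext i
  simp only [adjT]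
  split_ifs <;> push_cast <;> rfl

end AdjacencyTensor

section Lagrangian

variable {R : Type*} [CommSemiring R]

/-- `A(Γ) x^k = k · lagrangian E γ x`; for `γ = 1` this is the Lagrangian of the hypergraph. -/
def lagrangian (E : Finset (Finset V)) (γ : Finset V → R) (x : V → R) : R :=
  ∑ e ∈ E, γ e * ∏ u ∈ e, x u

theorem lagrangian_smul {k : ℕ} {E : Finset (Finset V)} (hE : ∀ e ∈ E, e.card = k)
    (γ : Finset V → R) (c : R) (x : V → R) :
    lagrangian E γ (c • x) = c ^ k * lagrangian E γ x := by
  simp only [lagrangian, mul_sum, Pi.smul_apply, smul_eq_mul, prod_mul_distrib, prod_const]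
  exact sum_congr rfl fun e he => by rw [hE e he]; ring

variable [DecidableEq V]

theorem sum_mul_edgeSum [Fintype V] {k : ℕ} {E : Finset (Finset V)} (hE : ∀ e ∈ E, e.card = k)
    (γ : Finset V → R) (x : V → R) :
    ∑ v, x v * edgeSum E γ x v = k * lagrangian E γ x := by
  simp only [edgeSum, lagrangian, mul_sum, sum_filter]
  rw [sum_comm]
  refine sum_congr rfl fun e he => ?_
  have hterm : ∀ v, (x v * if v ∈ e then γ e * ∏ u ∈ e.erase v, x u else 0)
      = if v ∈ e then γ e * ∏ u ∈ e, x u else 0 := by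
    intro v
    split_ifs with hv
    · rw [mul_left_comm, mul_prod_erase e x hv]
    · rw [mul_zero]
  rw [sum_congr rfl fun v _ => hterm v, sum_ite_mem, univ_inter, sum_const, hE e he, nsmul_eq_mul]

theorem lagrangian_update (E : Finset (Finset V)) (γ : Finset V → R) (x : V → R) (v : V) (t : R) :
    lagrangian E γ (Function.update x v t)
      = t * edgeSum E γ x v + lagrangian (E.filter (v ∉ ·)) γ x := by
  rw [lagrangian, ← sum_filter_add_sum_filter_not E (v ∈ ·), edgeSum, mul_sum, lagrangian]
  congr 1
  · refine sum_congr rfl fun e he => ?_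
    have hv : v ∈ e := (mem_filter.mp he).2
    rw [← mul_prod_erase e _ hv, Function.update_self,
      prod_congr rfl fun u hu => Function.update_of_ne (ne_of_mem_erase hu) t x]
    ring
  · refine sum_congr rfl fun e he => congrArg (γ e * ·) (prod_congr rfl fun u hu => ?_)
    refine Function.update_of_ne ?_ t x
    rintro rfl
    exact (mem_filter.mp he).2 hu

theorem edgeSum_mul_of_sq_eq_one {R : Type*} [CommRing R] (E : Finset (Finset V)) (γ : Finset V → R) (x s : V → R)
    (v : V) (hs : s v * s v = 1) :
    edgeSum E γ (s * x) v = s v * edgeSum E (fun e => γ e * ∏ u ∈ e, s u) x v := by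
  simp only [edgeSum, mul_sum]
  refine sum_congr rfl fun e he => ?_
  rw [Pi.mul_def, prod_mul_distrib, ← mul_prod_erase e s (mem_filter.mp he).2]
  linear_combination -(γ e * (∏ u ∈ e.erase v, s u) * ∏ u ∈ e.erase v, x u) * hs

end Lagrangian

section Switching

variable [DecidableEq V]

theorem exists_sign_of_reflTransGen {γ δ : Finset V → ℝ}
    (h : Relation.ReflTransGen VSwitchStep γ δ) :
    ∃ s : V → ℝ, (∀ v, s v = 1 ∨ s v = -1) ∧ ∀ e, δ e = γ e * ∏ v ∈ e, s v := by
  induction h with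
  | refl => exact ⟨1, fun _ => Or.inl rfl, fun e => by simp⟩
  | tail _ hstep ih =>
    obtain ⟨s, hs, hδ⟩ := ih
    obtain ⟨w, hw⟩ := hstep
    refine ⟨fun v => s v * if v = w then -1 else 1, fun v => ?_, fun e => ?_⟩
    · dsimp only
      rcases hs v with h | h <;> split_ifs <;> simp [h]
    · rw [hw, hδ, prod_mul_distrib, prod_ite_eq' e w fun _ => (-1 : ℝ)]
      split_ifs <;> ring

theorem reflTransGen_switch (γ : Finset V → ℝ) (W : Finset V) :
    Relation.ReflTransGen VSwitchStep γ fun e => γ e * ∏ v ∈ e, if v ∈ W then -1 else 1 := by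
  induction W using Finset.induction_on with
  | empty => simpa using Relation.ReflTransGen.refl
  | insert w W hw ih =>
    refine ih.tail ⟨w, fun e => ?_⟩
    have hsplit : ∀ v, (if v ∈ insert w W then (-1 : ℝ) else 1)
        = (if v ∈ W then -1 else 1) * if v = w then -1 else 1 := by
      intro v
      by_cases hvw : v = w
      · subst hvw; simp [hw]
      · simp [hvw]
    simp only [hsplit, prod_mul_distrib, prod_ite_eq' e w fun _ => (-1 : ℝ)]
    split_ifs <;> ring

theorem signedSwitchEquiv_iff {E : Finset (Finset V)} {γ γ' : Finset V → ℝ} :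
    SignedSwitchEquiv E γ γ' ↔
      ∃ s : V → ℝ, (∀ v, s v = 1 ∨ s v = -1) ∧ ∀ e ∈ E, γ e * ∏ v ∈ e, s v = γ' e := by
  constructor
  · rintro ⟨δ, hγδ, hδ⟩
    obtain ⟨s, hs, hδs⟩ := exists_sign_of_reflTransGen hγδ
    exact ⟨s, hs, fun e he => by rw [← hδs, hδ e he]⟩
  · rintro ⟨s, hs, hγ'⟩
    refine ⟨_, reflTransGen_switch γ ((E.sup id).filter (s · = -1)), fun e he => ?_⟩
    rw [← hγ' e he]
    congr 1
    refine prod_congr rfl fun v hv => ?_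
    have hvE : v ∈ E.sup id := mem_sup.mpr ⟨e, he, hv⟩
    rcases hs v with h | h <;> norm_num [hvE, h]

end Switching

section Connectivity

variable [DecidableEq V] {E : Finset (Finset V)}

theorem HConnectedF.nonempty (h : HConnectedF E) (hE : ∅ ∉ E) : Nonempty V := by
  obtain ⟨v | e⟩ := SimpleGraph.Connected.nonempty h
  · exact ⟨v⟩
  · obtain ⟨v, -⟩ := nonempty_iff_ne_empty.mpr (ne_of_mem_of_not_mem e.2 hE)
    exact ⟨v⟩

theorem HConnectedF.exists_edge_pred_and_not_pred (h : HConnectedF E) (p : V → Prop) {a b : V} (ha : p a)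
    (hb : ¬ p b) : ∃ e ∈ E, (∃ u ∈ e, p u) ∧ ∃ w ∈ e, ¬ p w := by
  by_contra! hE
  let S : Set (V ⊕ {e // e ∈ E}) := {z | Sum.elim p (fun e => ∀ u ∈ e.1, p u) z}
  obtain ⟨walk⟩ := h.preconnected (Sum.inl a) (Sum.inl b)
  obtain ⟨d, -, hz, hz'⟩ := walk.exists_boundary_dart S ha hb
  have hadj := d.adj
  generalize d.fst = z at hz hadj
  generalize d.snd = z' at hz' hadj
  rcases hadj with ⟨v, e, rfl, rfl, hve⟩ | ⟨v, e, rfl, rfl, hve⟩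
  · exact hz' fun u hu => hE e.1 e.2 ⟨v, hve, hz⟩ u hu
  · exact hz' (hz v hve)

end Connectivity

theorem lagrangian_one_nonneg (E : Finset (Finset V)) {x : V → ℝ} (hx : 0 ≤ x) :
    0 ≤ lagrangian E 1 x :=
  sum_nonneg fun _ _ => mul_nonneg zero_le_one (prod_nonneg fun u _ => hx u)

section LagrangianMaximum

variable [DecidableEq V] [Fintype V] {k : ℕ} {E : Finset (Finset V)}

theorem exists_lagrangian_le [Nonempty V] (hk : k ≠ 0) (hE : ∀ e ∈ E, e.card = k) :
    ∃ x : V → ℝ, 0 ≤ x ∧ ∑ v, x v ^ k = 1 ∧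
      ∀ y, 0 ≤ y → lagrangian E 1 y ≤ lagrangian E 1 x * ∑ v, y v ^ k := by
  set S : Set (V → ℝ) := {x | 0 ≤ x ∧ ∑ v, x v ^ k = 1}
  have hS : IsCompact S := by
    refine (isCompact_Icc (a := 0) (b := 1)).of_isClosed_subset
      (isClosed_Ici.inter (isClosed_eq (f := fun x : V → ℝ => ∑ v, x v ^ k) (by fun_prop)
        continuous_const)) ?_
    rintro x ⟨hx0, hx1⟩
    refine ⟨hx0, fun v => ?_⟩
    by_contra! hv
    have : x v ^ k ≤ ∑ u, x u ^ k := single_le_sum (fun u _ => pow_nonneg (hx0 u) k) (mem_univ v)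
    linarith [one_lt_pow₀ hv hk]
  obtain ⟨v₀⟩ := ‹Nonempty V›
  have hS₀ : Pi.single v₀ 1 ∈ S := by
    refine ⟨Pi.single_nonneg.mpr zero_le_one, ?_⟩
    rw [sum_eq_single v₀ (fun u _ hu => by simp [hu, hk]) (by simp)]
    simp
  have hcont : Continuous (lagrangian E (1 : Finset V → ℝ)) := by unfold lagrangian; fun_prop
  obtain ⟨x, ⟨hx0, hx1⟩, hmax⟩ := hS.exists_isMaxOn ⟨_, hS₀⟩ hcont.continuousOn
  refine ⟨x, hx0, hx1, fun y hy => ?_⟩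
  set N := ∑ v, y v ^ k
  have hN : 0 ≤ N := sum_nonneg fun v _ => pow_nonneg (hy v) k
  rcases hN.eq_or_lt with hN0 | hNpos
  · have hy0 : y = 0 := funext fun v => (pow_eq_zero_iff hk).mp <|
      (sum_eq_zero_iff_of_nonneg fun u _ => pow_nonneg (hy u) k).mp hN0.symm v (mem_univ v)
    rw [hy0, ← zero_smul ℝ (0 : V → ℝ), lagrangian_smul hE, zero_pow hk, ← hN0]
    simp
  · set c := (N⁻¹) ^ ((k : ℝ)⁻¹)
    have hck : c ^ k = N⁻¹ := Real.rpow_inv_natCast_pow (inv_nonneg.mpr hN) hk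
    have hcy : c • y ∈ S := by
      refine ⟨smul_nonneg (Real.rpow_nonneg (inv_nonneg.mpr hN) _) hy, ?_⟩
      simp only [Pi.smul_apply, smul_eq_mul, mul_pow, ← mul_sum, hck]
      exact inv_mul_cancel₀ hNpos.ne'
    have : lagrangian E 1 (c • y) ≤ lagrangian E 1 x := hmax hcy
    rw [lagrangian_smul hE, hck, inv_mul_le_iff₀ hNpos] at this
    rwa [mul_comm]

theorem pos_of_lagrangian_eq (hconn : HConnectedF E) (hk : k ≠ 0) (hE : ∀ e ∈ E, e.card = k)
    {μ : ℝ} (hμ : ∀ y, 0 ≤ y → lagrangian E 1 y ≤ μ * ∑ v, y v ^ k) {x : V → ℝ} (hx0 : 0 ≤ x)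
    (hx : x ≠ 0) (hxμ : lagrangian E 1 x = μ * ∑ v, x v ^ k) (v : V) : 0 < x v := by
  by_contra hv
  obtain ⟨a₀, ha₀⟩ := Function.ne_iff.mp hx
  obtain ⟨e, he, ⟨a, hae, ha⟩, b, hbe, hb⟩ :=
    hconn.exists_edge_pred_and_not_pred (fun u => 0 < x u) ((hx0 a₀).lt_of_ne' ha₀) hv
  have hxb : x b = 0 := le_antisymm (not_lt.mp hb) (hx0 b)
  have hμ0 : 0 ≤ μ := by
    refine nonneg_of_mul_nonneg_left (hxμ ▸ lagrangian_one_nonneg E hx0) ?_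
    exact (single_le_sum (fun u _ => pow_nonneg (hx0 u) k) (mem_univ a)).trans_lt' (pow_pos ha k)
  have hsmall : ∀ ε > 0, x a ≤ μ * Fintype.card V * ε := by
    intro ε hε
    set y : V → ℝ := fun u => max (x u) ε
    have hxy : x ≤ y := fun u => le_max_left _ _
    have hgain : lagrangian E 1 x + x a * ε ^ (k - 1) ≤ lagrangian E 1 y := by
      simp only [lagrangian, Pi.one_apply, one_mul]
      rw [← add_sum_erase E _ he, ← add_sum_erase E _ he, prod_eq_zero hbe hxb, zero_add,
        add_comm, ← mul_prod_erase e y hae]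
      gcongr with e' _ u
      · exact hxy a
      · calc ε ^ (k - 1) = ∏ _u ∈ e.erase a, ε := by rw [prod_const, card_erase_of_mem hae, hE e he]
          _ ≤ ∏ u ∈ e.erase a, y u := prod_le_prod (fun _ _ => hε.le) fun u _ => le_max_right _ _
      · exact fun u _ => hx0 u
      · exact hxy u
    have hcost : ∑ u, y u ^ k ≤ ∑ u, x u ^ k + Fintype.card V * ε ^ k := by
      rw [← nsmul_eq_mul, ← card_univ, ← sum_const, ← sum_add_distrib]
      refine sum_le_sum fun u _ => ?_
      show max (x u) ε ^ k ≤ _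
      rcases max_choice (x u) ε with h | h <;> rw [h] <;>
        linarith [pow_nonneg (hx0 u) k, pow_nonneg hε.le k]
    have := hgain.trans ((hμ y (hx0.trans hxy)).trans (mul_le_mul_of_nonneg_left hcost hμ0))
    rw [hxμ, ← mul_pow_sub_one hk] at this
    refine le_of_mul_le_mul_right ?_ (pow_pos hε (k - 1))
    linarith
  have hlim : Filter.Tendsto (fun ε => μ * Fintype.card V * ε) (nhdsWithin 0 (Set.Ioi 0))
      (nhds 0) :=
    ((continuous_const_mul _).tendsto' 0 0 (mul_zero _)).mono_left nhdsWithin_le_nhds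
  exact (ge_of_tendsto hlim (eventually_nhdsWithin_of_forall hsmall)).not_gt ha

theorem edgeSum_eq_of_lagrangian_eq {μ : ℝ}
    (hμ : ∀ y, 0 ≤ y → lagrangian E 1 y ≤ μ * ∑ v, y v ^ k) {x : V → ℝ} (hx : ∀ v, 0 < x v)
    (hxμ : lagrangian E 1 x = μ * ∑ v, x v ^ k) (v : V) :
    edgeSum E 1 x v = k * μ * x v ^ (k - 1) := by
  set P := edgeSum E 1 x v
  set C := lagrangian (E.filter (v ∉ ·)) 1 x
  set R := ∑ u ∈ univ \ {v}, x u ^ k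
  have hpow : ∀ t, ∑ u, Function.update x v t u ^ k = t ^ k + R := fun t =>
    calc ∑ u, Function.update x v t u ^ k = ∑ u, Function.update (x · ^ k) v (t ^ k) u :=
          sum_congr rfl fun u _ => Function.apply_update (fun _ r => r ^ k) x v t u
      _ = t ^ k + R := sum_update_of_mem (mem_univ v) _ _
  have hle : ∀ t, 0 ≤ t → t * P + C ≤ μ * (t ^ k + R) := fun t ht => by
    rw [← hpow, ← lagrangian_update]
    refine hμ _ fun u => ?_
    rcases eq_or_ne u v with rfl | hu
    · simpa using ht
    · simpa [hu] using (hx u).le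
  have heq : x v * P + C = μ * (x v ^ k + R) := by
    rw [← hpow, ← lagrangian_update, Function.update_eq_self, hxμ]
  have hmin : IsLocalMin (fun t => μ * (t ^ k + R) - (t * P + C)) (x v) := by
    filter_upwards [Ioi_mem_nhds (hx v)] with t ht
    linarith [hle t (le_of_lt ht)]
  have hderiv : HasDerivAt (fun t => μ * (t ^ k + R) - (t * P + C))
      (μ * (k * x v ^ (k - 1)) - 1 * P) (x v) :=
    (((hasDerivAt_pow k _).add_const R).const_mul μ).sub
      (((hasDerivAt_id _).mul_const P).add_const C)
  linarith [hmin.hasDerivAt_eq_zero hderiv]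

end LagrangianMaximum

section SpectralRadius

variable [DecidableEq V] [Fintype V] {k : ℕ} [NeZero k] {E : Finset (Finset V)}

theorem norm_le_of_isTensorEigenpair (hE : ∀ e ∈ E, e.card = k) {μ : ℝ}
    (hμ : ∀ y, 0 ≤ y → lagrangian E 1 y ≤ μ * ∑ v, y v ^ k) {lam : ℂ} {z : V → ℂ}
    (h : IsTensorEigenpair ℂ k (adjT ℂ k E 1) lam z) : ‖lam‖ ≤ k * μ := by
  obtain ⟨hz, heig⟩ := (isTensorEigenpair_adjT_iff hE).mp h
  set m : V → ℝ := fun v => ‖z v‖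
  have hm0 : 0 ≤ m := fun v => norm_nonneg (z v)
  obtain ⟨v₀, hv₀⟩ := Function.ne_iff.mp hz
  have hmpos : 0 < ∑ v, m v ^ k :=
    (single_le_sum (fun u _ => pow_nonneg (hm0 u) k) (mem_univ v₀)).trans_lt'
      (pow_pos (norm_pos_iff.mpr hv₀) k)
  have hpt : ∀ v, ‖lam‖ * m v ^ (k - 1) ≤ edgeSum E 1 m v := fun v =>
    calc ‖lam‖ * m v ^ (k - 1) = ‖edgeSum E 1 z v‖ := by rw [heig, norm_mul, norm_pow]
      _ ≤ edgeSum E 1 m v := by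
        refine (norm_sum_le _ _).trans_eq (sum_congr rfl fun e _ => ?_)
        simp [m, norm_prod]
  have hsum : ‖lam‖ * ∑ v, m v ^ k ≤ (k * μ) * ∑ v, m v ^ k :=
    calc ‖lam‖ * ∑ v, m v ^ k = ∑ v, m v * (‖lam‖ * m v ^ (k - 1)) := by
          simp only [mul_sum, mul_left_comm (m _), mul_pow_sub_one (NeZero.ne k)]
      _ ≤ ∑ v, m v * edgeSum E 1 m v :=
          sum_le_sum fun v _ => mul_le_mul_of_nonneg_left (hpt v) (hm0 v)
      _ = k * lagrangian E 1 m := sum_mul_edgeSum hE 1 m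
      _ ≤ (k * μ) * ∑ v, m v ^ k := by
          rw [mul_assoc]; exact mul_le_mul_of_nonneg_left (hμ m hm0) k.cast_nonneg
  exact le_of_mul_le_mul_right hsum hmpos

theorem tSpecRad_adjT_eq (hE : ∀ e ∈ E, e.card = k) {μ : ℝ} (hμ0 : 0 ≤ μ)
    (hμ : ∀ y, 0 ≤ y → lagrangian E 1 y ≤ μ * ∑ v, y v ^ k) {x : V → ℝ} (hx : x ≠ 0)
    (heig : ∀ v, edgeSum E 1 x v = k * μ * x v ^ (k - 1)) :
    tSpecRad k (adjT ℝ k E 1) = k * μ := by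
  refine IsGreatest.csSup_eq ⟨⟨(k * μ : ℝ), ⟨fun v => x v, ?_⟩, ?_⟩, ?_⟩
  · rw [adjT_ofReal, isTensorEigenpair_adjT_iff hE]
    refine ⟨fun h => hx (funext fun v => by simpa using congrFun h v), fun v => ?_⟩
    have h := congrArg (fun r : ℝ => (r : ℂ)) (heig v)
    simp only [edgeSum, Pi.one_apply] at h ⊢
    push_cast at h ⊢
    exact h
  · rw [Complex.norm_real, Real.norm_of_nonneg (by positivity)]
  · rintro r ⟨lam, ⟨z, hz⟩, rfl⟩
    rw [adjT_ofReal] at hz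
    exact norm_le_of_isTensorEigenpair hE hμ hz

end SpectralRadius

section SwitchingAndEigenvectors

variable [DecidableEq V] {k : ℕ} {E : Finset (Finset V)}

theorem edgeSum_mul_eq_neg_of_switch {R : Type*} [CommRing R] {γ : Finset V → R} {s : V → R}
    (hs : ∀ v, s v = 1 ∨ s v = -1) (hγs : ∀ e ∈ E, γ e * ∏ u ∈ e, s u = -1) (x : V → R) (v : V) :
    edgeSum E γ (s * x) v = -(s v * edgeSum E 1 x v) := by
  rw [edgeSum_mul_of_sq_eq_one E γ x s v (by rcases hs v with h | h <;> simp [h]), ← mul_neg,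
    edgeSum, edgeSum, ← sum_neg_distrib]
  congr 1
  refine sum_congr rfl fun e he => ?_
  rw [hγs e (mem_filter.mp he).1, Pi.one_apply]
  ring

variable [Fintype V]

theorem lagrangian_abs_eq_of_edgeSum_eq_neg (hk : Even k) (hk0 : k ≠ 0)
    (hE : ∀ e ∈ E, e.card = k) {γ : Finset V → ℝ} (hγ : ∀ e ∈ E, |γ e| = 1) {μ : ℝ}
    (hμ : ∀ y, 0 ≤ y → lagrangian E 1 y ≤ μ * ∑ v, y v ^ k) {x : V → ℝ}
    (heig : ∀ v, edgeSum E γ x v = -(k * μ) * x v ^ (k - 1)) :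
    lagrangian E 1 (fun v => |x v|) = μ * ∑ v, |x v| ^ k ∧
      ∀ e ∈ E, γ e * ∏ u ∈ e, x u = -∏ u ∈ e, |x u| := by
  have hx : lagrangian E γ x = -(μ * ∑ v, |x v| ^ k) := by
    have h := sum_mul_edgeSum hE γ x
    simp only [heig, mul_left_comm (x _), mul_pow_sub_one hk0, ← mul_sum] at h
    simp only [hk.pow_abs]
    apply mul_left_cancel₀ (Nat.cast_ne_zero.mpr hk0 : (k : ℝ) ≠ 0)
    linear_combination -h
  have hterm : ∀ e ∈ E, 0 ≤ γ e * ∏ u ∈ e, x u + ∏ u ∈ e, |x u| := fun e he => by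
    have habs : |γ e * ∏ u ∈ e, x u| = ∏ u ∈ e, |x u| := by rw [abs_mul, hγ e he, abs_prod, one_mul]
    linarith [neg_abs_le (γ e * ∏ u ∈ e, x u)]
  have hsplit : ∑ e ∈ E, (γ e * ∏ u ∈ e, x u + ∏ u ∈ e, |x u|)
      = lagrangian E γ x + lagrangian E 1 (fun v => |x v|) := by
    simp [lagrangian, sum_add_distrib]
  have hsum : ∑ e ∈ E, (γ e * ∏ u ∈ e, x u + ∏ u ∈ e, |x u|) = 0 := by
    refine le_antisymm ?_ (sum_nonneg hterm)
    linarith [hμ (fun v => |x v|) fun v => abs_nonneg (x v)]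
  refine ⟨by linarith, fun e he => ?_⟩
  linarith [(sum_eq_zero_iff_of_nonneg hterm).mp hsum e he]

theorem exists_switch_of_edgeSum_eq_neg (hconn : HConnectedF E) (hk : Even k)
    (hk0 : k ≠ 0) (hE : ∀ e ∈ E, e.card = k) {γ : Finset V → ℝ} (hγ : ∀ e ∈ E, |γ e| = 1)
    {μ : ℝ} (hμ : ∀ y, 0 ≤ y → lagrangian E 1 y ≤ μ * ∑ v, y v ^ k) {x : V → ℝ} (hx : x ≠ 0)
    (heig : ∀ v, edgeSum E γ x v = -(k * μ) * x v ^ (k - 1)) :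
    ∃ s : V → ℝ, (∀ v, s v = 1 ∨ s v = -1) ∧ ∀ e ∈ E, γ e * ∏ u ∈ e, s u = -1 := by
  obtain ⟨hlagr, hedge⟩ := lagrangian_abs_eq_of_edgeSum_eq_neg hk hk0 hE hγ hμ heig
  have hpos : ∀ v, 0 < |x v| :=
    pos_of_lagrangian_eq hconn hk0 hE hμ (fun v => abs_nonneg (x v))
      (fun h => hx (funext fun v => abs_eq_zero.mp (congrFun h v))) hlagr
  refine ⟨fun v => SignType.sign (x v), fun v => ?_, fun e he => ?_⟩
  · rcases lt_or_gt_of_ne (abs_pos.mp (hpos v)) with h | h <;> simp [h]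
  · have hprod : ∏ u ∈ e, x u = (∏ u ∈ e, (SignType.sign (x u) : ℝ)) * ∏ u ∈ e, |x u| := by
      rw [← prod_mul_distrib]
      exact prod_congr rfl fun u _ => (sign_mul_abs (x u)).symm
    refine mul_right_cancel₀ (prod_pos (s := e) fun u _ => hpos u).ne' ?_
    linear_combination hedge e he - γ e * hprod

end SwitchingAndEigenvectors

theorem abs_inducedSign [DecidableEq V] {k : ℕ} {E : Finset (Finset V)} {σ : Finset V → V → ℝ}
    (hσ : IsIncidenceOrientation E σ) {e : Finset V} (he : e ∈ E) : |inducedSign k σ e| = 1 := by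
  rw [inducedSign, abs_mul, abs_pow, abs_neg, abs_one, one_pow, one_mul, abs_prod]
  exact prod_eq_one fun v hv => by rcases hσ e he v hv with h | h <;> simp [h]

/-- for a connected `k`-uniform oriented hypergraph `G^σ` with `k` even, the
induced signed hypergraph `ΓG^σ` is switching equivalent to `ΓG⁺` iff `-ρ(A(G))` is an
H-eigenvalue of `A(ΓG^σ)`.  (Here `ΓG⁺` has all edge signs `(-1)^{k-1} = -1`.) -/
theorem induced_switchEquiv_plus_iff_H_eigenvalue [Fintype V] [DecidableEq V]
    (k : ℕ) [NeZero k] (hk : Even k) (E : Finset (Finset V)) (hE : ∀ e ∈ E, e.card = k)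
    (hconn : HConnectedF E) (σ : Finset V → V → ℝ) (hσ : IsIncidenceOrientation E σ) :
    SignedSwitchEquiv E (inducedSign k σ) (fun _ => (-1 : ℝ) ^ (k - 1)) ↔
      ∃ x : V → ℝ, IsTensorEigenpair ℝ k (adjT ℝ k E (inducedSign k σ))
        (-(tSpecRad k (adjT ℝ k E fun _ => 1))) x := by
  have hk0 : k ≠ 0 := NeZero.ne k
  have hodd : Odd (k - 1) := Nat.Even.sub_odd (Nat.one_le_iff_ne_zero.mpr hk0) hk odd_one
  have : Nonempty V := hconn.nonempty fun h => hk0 (by simpa using (hE ∅ h).symm)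
  obtain ⟨x₀, hx₀0, hx₀1, hμ⟩ := exists_lagrangian_le hk0 hE
  have hx₀ : x₀ ≠ 0 := by rintro rfl; simp [zero_pow hk0] at hx₀1
  have hx₀μ : lagrangian E 1 x₀ = lagrangian E 1 x₀ * ∑ v, x₀ v ^ k := by rw [hx₀1, mul_one]
  have hpos := pos_of_lagrangian_eq hconn hk0 hE hμ hx₀0 hx₀ hx₀μ
  have heig := edgeSum_eq_of_lagrangian_eq hμ hpos hx₀μ
  have hρ : tSpecRad k (adjT ℝ k E fun _ => 1) = k * lagrangian E 1 x₀ :=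
    tSpecRad_adjT_eq hE (lagrangian_one_nonneg E hx₀0) hμ hx₀ heig
  simp only [hρ, signedSwitchEquiv_iff, isTensorEigenpair_adjT_iff hE, hodd.neg_one_pow]
  constructor
  · rintro ⟨s, hs, hγs⟩
    have hs_pow : ∀ v, s v ^ (k - 1) = s v := fun v => by
      rcases hs v with h | h <;> simp [h, hodd.neg_one_pow]
    refine ⟨s * x₀, fun h => ?_, fun v => ?_⟩
    · obtain ⟨v⟩ := ‹Nonempty V›
      have := congrFun h v
      rcases hs v with h | h <;> simp [h, (hpos v).ne'] at this
    · rw [edgeSum_mul_eq_neg_of_switch hs hγs, heig, Pi.mul_apply, mul_pow, hs_pow]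
      ring
  · rintro ⟨x, hx, hxeig⟩
    exact exists_switch_of_edgeSum_eq_neg hconn hk hk0 hE (fun e => abs_inducedSign hσ) hμ hx hxeig
end
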